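/- (Counterfactual stability of Gumbel-max, general) Let φ, φ̃ ∈ ℝ^M with softmax probabilities p and p̃. Given Gumbel noise Y₁,…,Y_M, if the factual outcome is argmax_m (φ_m + Y_m) = k and the counterfactual outcome argmax_m (φ̃_m + Y_m) = j with j ≠ k, then necessarily p̃_j / p_j > p̃_k / p_k. -/

import Mathlib

/-!
Dividing two softmax vectors coordinatewise gives `p̃ m / p m = exp (φ̃ m - φ m) · Z / Z̃` with
normalisers independent of `m`, so the ratio is strictly increasing in the logit shift
`φ̃ m - φ m`. Adding the two argmax inequalities `φ j + y j < φ k + y k` and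
`φ̃ k + y k < φ̃ j + y j` cancels the noise and shows that the shift is larger at `j` than at `k`.
-/

open Real

noncomputable section

variable {ι : Type*} [Fintype ι]

def softmax (φ : ι → ℝ) (m : ι) : ℝ :=
  exp (φ m) / ∑ m', exp (φ m')

theorem sum_exp_pos (φ : ι → ℝ) (m : ι) : 0 < ∑ m', exp (φ m') :=
  Finset.sum_pos (fun _ _ => exp_pos _) ⟨m, Finset.mem_univ m⟩

theorem softmax_div_softmax (ψ φ : ι → ℝ) (m : ι) :
    softmax ψ m / softmax φ m = exp (ψ m - φ m) * ((∑ m', exp (φ m')) / ∑ m', exp (ψ m')) := by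
  have hφ := sum_exp_pos φ m
  have hψ := sum_exp_pos ψ m
  rw [softmax, softmax, exp_sub]
  field_simp

theorem softmax_div_softmax_lt_softmax_div_softmax_iff (ψ φ : ι → ℝ) (i j : ι) :
    softmax ψ i / softmax φ i < softmax ψ j / softmax φ j ↔ ψ i - φ i < ψ j - φ j := by
  have hZ : 0 < (∑ m', exp (φ m')) / ∑ m', exp (ψ m') := div_pos (sum_exp_pos φ i) (sum_exp_pos ψ i)
  rw [softmax_div_softmax, softmax_div_softmax, mul_lt_mul_iff_of_pos_right hZ, exp_lt_exp]

end

/-- General counterfactual stability of Gumbel-max: for logits `φ, φ̃` with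
softmax probabilities `p, p̃` and a fixed realization `y` of the Gumbel noise,
if the factual outcome is `k` (unique argmax of `φ + y`) and the counterfactual
outcome is `j ≠ k` (unique argmax of `φ̃ + y`), then `p̃ j / p j > p̃ k / p k`. -/
theorem gumbel_max_counterfactual_stability {M : ℕ} (φ φt : Fin M → ℝ)
    (y : Fin M → ℝ) (p pt : Fin M → ℝ)
    (hp : ∀ m, p m = Real.exp (φ m) / ∑ m', Real.exp (φ m'))
    (hpt : ∀ m, pt m = Real.exp (φt m) / ∑ m', Real.exp (φt m'))
    (k j : Fin M)
    (hk : ∀ m, m ≠ k → φ m + y m < φ k + y k)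
    (hj : ∀ m, m ≠ j → φt m + y m < φt j + y j)
    (hjk : j ≠ k) :
    pt j / p j > pt k / p k := by
  obtain rfl : p = softmax φ := funext hp
  obtain rfl : pt = softmax φt := funext hpt
  rw [gt_iff_lt, softmax_div_softmax_lt_softmax_div_softmax_iff]
  linarith [hk j hjk, hj k hjk.symm]
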